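/- arXiv:2209.12724 — 2 statements merged into one kernel-verified Lean document; each statement's English description precedes it below -/
import Mathlib

section
/- Let c > 0, let h : [0,T) → ℝ be continuous, nonnegative and nondecreasing with h(0)=0, and let z : (0,T) → ℝ be a C¹ function satisfying z'(t) ≤ -c·(max{z(t),0})² + h'(t) for all t ∈ (0,T) (where h is C¹ on (0,T)). Then z(t) ≤ 1/(c·t) + h(t) for all t ∈ (0,T). -/
open Set Filter Topology

/-- Barrier comparison: for each `η ∈ (0, t₀)`, `z t₀` is below the barrier
    `(c(t₀-η))⁻¹ + h t₀ + η(t₀-η)`. -/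
lemma aux_barrier (T c : ℝ) (hT : 0 < T) (hc : 0 < c)
    (h z : ℝ → ℝ)
    (hhnn : ∀ t ∈ Ico (0:ℝ) T, 0 ≤ h t)
    (hhdiff : ∀ t ∈ Ioo (0:ℝ) T, DifferentiableAt ℝ h t)
    (hzdiff : ∀ t ∈ Ioo (0:ℝ) T, DifferentiableAt ℝ z t)
    (hode : ∀ t ∈ Ioo (0:ℝ) T,
      deriv z t ≤ -c * (max (z t) 0)^2 + deriv h t)
    (t₀ η : ℝ) (ht₀ : t₀ ∈ Ioo 0 T) (hη : 0 < η) (hηt : η < t₀) :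
    z t₀ ≤ (c*(t₀-η))⁻¹ + h t₀ + η*(t₀-η) := by
  by_contra hcon
  push_neg at hcon
  set b : ℝ → ℝ := fun t => (c*(t-η))⁻¹ + h t + η*(t-η) with hbdef
  set w : ℝ → ℝ := fun t => z t - b t with hwdef
  have hsub : Icc η t₀ ⊆ Ioo 0 T := fun x hx => ⟨lt_of_lt_of_le hη hx.1, lt_of_le_of_lt hx.2 ht₀.2⟩
  have hzc : ContinuousOn z (Icc η t₀) := fun x hx =>
    ((hzdiff x (hsub hx)).continuousAt).continuousWithinAt
  obtain ⟨M, hM⟩ := (isCompact_Icc).exists_bound_of_continuousOn hzc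
  set K := max M 1 with hKdef
  have hK : 0 < K := lt_of_lt_of_le one_pos (le_max_right _ _)
  set δ := min (t₀ - η) (1/(c*K)) / 2 with hδdef
  have hδpos : 0 < δ := by
    apply div_pos _ two_pos
    exact lt_min (by linarith) (by positivity)
  set t₁ := η + δ with ht₁def
  have ht₁η : η < t₁ := by simp [ht₁def]; linarith
  have ht₁t₀ : t₁ < t₀ := by
    have : δ < t₀ - η := by
      have h1 := min_le_left (t₀ - η) (1/(c*K))
      rw [hδdef]; linarith
    simp [ht₁def]; linarith
  -- the barrier is big at t₁
  have hbar : 2*K ≤ (c*(t₁-η))⁻¹ := by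
    have hδ2 : t₁ - η = δ := by simp [ht₁def]
    have hle : c*δ ≤ 1/(2*K) := by
      have : δ ≤ 1/(c*K)/2 := by
        have h1 := min_le_right (t₀ - η) (1/(c*K))
        rw [hδdef]; linarith
      have hck : 0 < c*K := by positivity
      rw [div_div] at this
      calc c*δ ≤ c*(1/(c*K*2)) := by nlinarith
        _ = 1/(K*2) := by
          rw [mul_comm (c*K) 2, ← mul_assoc]
          field_simp
        _ = 1/(2*K) := by ring_nf
    have hcd : 0 < c*δ := by positivity
    have := one_div_le_one_div_of_le hcd hle
    rw [one_div_one_div] at this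
    rw [hδ2, ← one_div]
    linarith
  have ht₁Ico : t₁ ∈ Ico (0:ℝ) T := ⟨by linarith, by linarith [ht₀.2]⟩
  have hwt₁ : w t₁ < 0 := by
    have hz1 : z t₁ ≤ M := by
      have := hM t₁ ⟨ht₁η.le, ht₁t₀.le⟩
      exact le_trans (le_abs_self _) this
    have hh1 : 0 ≤ h t₁ := hhnn t₁ ht₁Ico
    have hl1 : 0 ≤ η*(t₁-η) := by nlinarith
    have hMK : M ≤ K := le_max_left _ _
    simp only [hwdef, hbdef]
    nlinarith
  -- the set where w ≥ 0
  set B := {t | t ∈ Icc t₁ t₀ ∧ 0 ≤ w t} with hBdef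
  have hwt₀ : 0 < w t₀ := by simp only [hwdef, hbdef]; linarith
  have hBne : t₀ ∈ B := ⟨⟨ht₁t₀.le, le_refl _⟩, hwt₀.le⟩
  have hsub2 : Icc t₁ t₀ ⊆ Ioo 0 T := fun x hx => hsub ⟨le_trans ht₁η.le hx.1, hx.2⟩
  have hwdiff : ∀ x ∈ Icc t₁ t₀, DifferentiableAt ℝ w x := by
    intro x hx
    have hxη : η < x := lt_of_lt_of_le ht₁η hx.1
    have hne : c*(x-η) ≠ 0 := ne_of_gt (mul_pos hc (by linarith))
    have h1 : DifferentiableAt ℝ (fun t => c*(t-η)) x := by fun_prop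
    have h2 : DifferentiableAt ℝ (fun t => (c*(t-η))⁻¹) x := h1.inv hne
    exact (hzdiff x (hsub2 hx)).sub (((h2.add (hhdiff x (hsub2 hx))).add (by fun_prop)))
  have hwcont : ContinuousOn w (Icc t₁ t₀) := fun x hx =>
    (hwdiff x hx).continuousAt.continuousWithinAt
  have hBclosed : IsClosed B := by
    have : B = Icc t₁ t₀ ∩ w ⁻¹' (Ici 0) := by
      ext x; simp [hBdef, mem_preimage]
    rw [this]
    exact (hwcont.preimage_isClosed_of_isClosed isClosed_Icc isClosed_Ici)
  have hBbdd : BddBelow B := ⟨t₁, fun x hx => hx.1.1⟩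
  set s := sInf B with hsdef
  have hsB : s ∈ B := hBclosed.csInf_mem ⟨t₀, hBne⟩ hBbdd
  have hws : 0 ≤ w s := hsB.2
  have hst₁ : t₁ < s := by
    rcases lt_or_eq_of_le hsB.1.1 with h' | h'
    · exact h'
    · exfalso; rw [← h'] at hws; linarith
  have hlt : ∀ t, t ∈ Ico t₁ s → w t < 0 := by
    intro t ht
    by_contra hge
    push_neg at hge
    have : t ∈ B := ⟨⟨ht.1, le_trans ht.2.le hsB.1.2⟩, hge⟩
    exact absurd (csInf_le hBbdd this) (not_le.mpr ht.2)
  have hsIoo : s ∈ Ioo 0 T := hsub2 hsB.1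
  have hsη : η < s := lt_trans ht₁η hst₁
  have hus : c*(s-η) ≠ 0 := ne_of_gt (mul_pos hc (by linarith))
  -- derivatives at s
  have hz' := (hzdiff s hsIoo).hasDerivAt
  have hh' := (hhdiff s hsIoo).hasDerivAt
  have hu : HasDerivAt (fun t => c*(t-η)) c s := by
    simpa using ((hasDerivAt_id s).sub_const η).const_mul c
  have hinv : HasDerivAt (fun t => (c*(t-η))⁻¹) (-c/(c*(s-η))^2) s := hu.inv hus
  have hlin : HasDerivAt (fun t : ℝ => η*(t-η)) η s := by
    simpa using ((hasDerivAt_id s).sub_const η).const_mul η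
  have hbderiv : HasDerivAt b (-c/(c*(s-η))^2 + deriv h s + η) s := (hinv.add hh').add hlin
  have hw : HasDerivAt w (deriv z s - (-c/(c*(s-η))^2 + deriv h s + η)) s := hz'.sub hbderiv
  -- key quantitative estimate: w' s ≤ -η
  have hhs : 0 ≤ h s := hhnn s ⟨hsIoo.1.le, hsIoo.2⟩
  have hA : 0 < (c*(s-η))⁻¹ := inv_pos.mpr (mul_pos hc (by linarith))
  have hzs : (c*(s-η))⁻¹ ≤ z s := by
    have hl : 0 ≤ η*(s-η) := by nlinarith
    simp only [hwdef, hbdef] at hws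
    linarith
  have hzspos : 0 < z s := lt_of_lt_of_le hA hzs
  have hode' := hode s hsIoo
  rw [max_eq_left hzspos.le] at hode'
  have hkey : deriv z s - (-c/(c*(s-η))^2 + deriv h s + η) ≤ -η := by
    have hsq : c/(c*(s-η))^2 ≤ c*(z s)^2 := by
      rw [div_eq_mul_inv, ← inv_pow]
      have h2 : ((c*(s-η))⁻¹)^2 ≤ (z s)^2 := pow_le_pow_left₀ hA.le hzs 2
      exact mul_le_mul_of_nonneg_left h2 hc.le
    have hneg : -c / (c*(s-η))^2 = -(c/(c*(s-η))^2) := by ring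
    rw [hneg]
    linarith
  -- but the left-derivative at s is nonneg
  have hslope := hasDerivAt_iff_tendsto_slope.mp hw
  have hslope' : Tendsto (slope w s) (𝓝[<] s)
      (𝓝 (deriv z s - (-c/(c*(s-η))^2 + deriv h s + η))) :=
    hslope.mono_left (nhdsWithin_mono _ (fun x hx => ne_of_lt hx))
  have hpos : ∀ᶠ t in 𝓝[<] s, 0 ≤ slope w s t := by
    filter_upwards [Ioo_mem_nhdsLT_of_mem (⟨hst₁, le_refl s⟩ : s ∈ Ioc t₁ s)] with t ht
    have hwt := hlt t ⟨ht.1.le, ht.2⟩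
    rw [slope_def_field]
    have h3 : (w t - w s)/(t - s) = (w s - w t)/(s - t) := by
      rw [← neg_div_neg_eq]; ring_nf
    rw [h3]
    exact div_nonneg (by linarith) (by linarith [ht.2])
  have hge : 0 ≤ deriv z s - (-c/(c*(s-η))^2 + deriv h s + η) :=
    ge_of_tendsto hslope' hpos
  linarith [hkey, hη]

theorem stmt2 (T c : ℝ) (hT : 0 < T) (hc : 0 < c)
    (h z : ℝ → ℝ)
    (hhc : ContinuousOn h (Ico 0 T)) (hh0 : h 0 = 0)
    (hhnn : ∀ t ∈ Ico (0:ℝ) T, 0 ≤ h t)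
    (hhmono : MonotoneOn h (Ico 0 T))
    (hhdiff : ∀ t ∈ Ioo (0:ℝ) T, DifferentiableAt ℝ h t)
    (hzdiff : ∀ t ∈ Ioo (0:ℝ) T, DifferentiableAt ℝ z t)
    (hode : ∀ t ∈ Ioo (0:ℝ) T,
      deriv z t ≤ -c * (max (z t) 0)^2 + deriv h t) :
    ∀ t ∈ Ioo (0:ℝ) T, z t ≤ 1/(c*t) + h t := by
  intro t ht
  have hct : c * t ≠ 0 := ne_of_gt (mul_pos hc ht.1)
  have hcont : ContinuousAt (fun η : ℝ => (c*(t-η))⁻¹ + h t + η*(t-η)) 0 := by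
    have h1 : ContinuousAt (fun η : ℝ => c*(t-η)) 0 := by fun_prop
    have h2 : c*(t-(0:ℝ)) ≠ 0 := by simpa using hct
    exact ((h1.inv₀ h2).add continuousAt_const).add (by fun_prop)
  have hlim : Tendsto (fun η : ℝ => (c*(t-η))⁻¹ + h t + η*(t-η)) (𝓝[>] 0)
      (𝓝 ((c*t)⁻¹ + h t)) := by
    have := hcont.tendsto.mono_left (nhdsWithin_le_nhds (s := Ioi (0:ℝ)))
    simpa using this
  have hev : ∀ᶠ η in 𝓝[>] (0:ℝ), z t ≤ (c*(t-η))⁻¹ + h t + η*(t-η) := by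
    filter_upwards [Ioo_mem_nhdsGT_of_mem (⟨le_refl (0:ℝ), ht.1⟩ : (0:ℝ) ∈ Ico 0 t)]
      with η hη
    exact aux_barrier T c hT hc h z hhnn hhdiff hzdiff hode t η ht hη.1 hη.2
  have := ge_of_tendsto hlim hev
  rw [one_div]
  exact this
end

section
/- Let n ≥ 1, p ≥ 1, q ≥ 1 with 1/q + n/(2p) > 1, and let g : [0,∞) → [0,∞) be continuous with compact support. Fix R₀ > 0 and T > 0, and for T' ∈ (T, T+1) define b(x,t) := -(T'-t)^{-1} g((T'-t)^{-1/2}|x|) for x ∈ B_{R₀}(0), t ∈ [0,T]. Then there is a constant c > 0, independent of T' ∈ (T,T+1), such that ∫₀^T ‖b(·,t)‖_{L^p(B_{R₀})}^q dt ≤ c. -/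
/-! Since `g` is bounded by some `M` and vanishes beyond some radius `R`, at time `t` the integrand
is at most `M^p (T'-t)^(-p)` on the ball of radius `R (T'-t)^(1/2)` and vanishes outside it, so the
spatial integral is `O((T'-t)^(n/2-p))` whatever `R₀` is. After raising to the power `q/p` this is
`(T'-t)^α` with `α = (n/2-p) q/p > -1`, and `∫₀^T (T'-t)^α dt ≤ T'^(α+1)/(α+1) ≤ (T+1)^(α+1)/(α+1)`
uniformly in `T'`. -/

open MeasureTheory Set Metric Module

theorem neg_one_lt_mul_div_of_one_lt_inv_add_div {d p q : ℝ} (hp : 0 < p) (hq : 0 < q)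
    (h : 1 < 1 / q + d / (2 * p)) : -1 < (d / 2 - p) * (q / p) := by
  have key : (d / 2 - p) * (q / p) + 1 = q * (1 / q + d / (2 * p) - 1) := by
    field_simp; ring
  have : 0 < q * (1 / q + d / (2 * p) - 1) := mul_pos hq (by linarith)
  linarith

theorem abs_rescaled_rpow_le_indicator {E : Type*} [SeminormedAddCommGroup E] {g : ℝ → ℝ}
    {M R s p : ℝ} (hM : ∀ ξ, ‖g ξ‖ ≤ M) (hR : ∀ ξ, R ≤ ‖ξ‖ → g ξ = 0) (hs : 0 < s) (hp : 0 < p)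
    (x : E) :
    |s⁻¹ * g (s ^ (-(1 / 2 : ℝ)) * ‖x‖)| ^ p ≤
      (closedBall (0 : E) (R * s ^ (1 / 2 : ℝ))).indicator (fun _ => M ^ p * s ^ (-p)) x := by
  by_cases hx : x ∈ closedBall (0 : E) (R * s ^ (1 / 2 : ℝ))
  · have hKs : M ^ p * s ^ (-p) = (s⁻¹ * M) ^ p := by
      rw [Real.mul_rpow (inv_nonneg.2 hs.le) (le_trans (norm_nonneg _) (hM 0)),
        Real.inv_rpow hs.le, Real.rpow_neg hs.le, mul_comm]
    rw [indicator_of_mem hx, hKs]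
    refine Real.rpow_le_rpow (abs_nonneg _) ?_ hp.le
    rw [abs_mul, abs_of_pos (inv_pos.2 hs)]
    exact mul_le_mul_of_nonneg_left (hM _) (inv_nonneg.2 hs.le)
  · rw [indicator_of_notMem hx, hR, mul_zero, abs_zero, Real.zero_rpow hp.ne']
    rw [mem_closedBall, dist_zero_right, not_le] at hx
    have hξ : R * s ^ (1 / 2 : ℝ) * s ^ (-(1 / 2 : ℝ)) = R := by
      rw [mul_assoc, ← Real.rpow_add hs]; norm_num
    rw [Real.norm_eq_abs, abs_of_nonneg (by positivity), ← hξ, mul_comm _ ‖x‖]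
    exact mul_le_mul_of_nonneg_right hx.le (by positivity)

section Rescaling

variable {E : Type*} [NormedAddCommGroup E] [NormedSpace ℝ E] [MeasurableSpace E] [BorelSpace E]
  [FiniteDimensional ℝ E] (μ : Measure E) [μ.IsAddHaarMeasure]

theorem setIntegral_indicator_const_closedBall_le {K r : ℝ} (hK : 0 ≤ K) (hr : 0 ≤ r)
    (S : Set E) :
    ∫ x in S, (closedBall (0 : E) r).indicator (fun _ => K) x ∂μ ≤
      K * (r ^ finrank ℝ E * μ.real (closedBall 0 1)) := by
  rw [integral_indicator measurableSet_closedBall, setIntegral_const, smul_eq_mul, mul_comm,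
    measureReal_restrict_apply measurableSet_closedBall,
    ← Measure.addHaar_real_closedBall' μ 0 hr]
  gcongr
  · exact measure_closedBall_lt_top.ne
  · exact inter_subset_left

theorem setIntegral_abs_rescaled_rpow_le {g : ℝ → ℝ} {M R s p : ℝ} (hM : ∀ ξ, ‖g ξ‖ ≤ M)
    (hR₀ : 0 ≤ R) (hR : ∀ ξ, R ≤ ‖ξ‖ → g ξ = 0) (hs : 0 < s) (hp : 0 < p) (S : Set E) :
    ∫ x in S, |s⁻¹ * g (s ^ (-(1 / 2 : ℝ)) * ‖x‖)| ^ p ∂μ ≤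
      M ^ p * R ^ finrank ℝ E * μ.real (closedBall 0 1) *
        s ^ ((finrank ℝ E : ℝ) / 2 - p) := by
  have hM₀ : 0 ≤ M := le_trans (norm_nonneg _) (hM 0)
  have hbound := abs_rescaled_rpow_le_indicator (E := E) hM hR hs hp
  calc ∫ x in S, |s⁻¹ * g (s ^ (-(1 / 2 : ℝ)) * ‖x‖)| ^ p ∂μ
      ≤ ∫ x in S, (closedBall (0 : E) (R * s ^ (1 / 2 : ℝ))).indicator
          (fun _ => M ^ p * s ^ (-p)) x ∂μ := by
        refine integral_mono_of_nonneg (.of_forall fun x => by positivity) ?_ (.of_forall hbound)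
        exact ((integrableOn_const measure_closedBall_lt_top.ne).integrable_indicator
          measurableSet_closedBall).restrict
    _ ≤ M ^ p * s ^ (-p) * ((R * s ^ (1 / 2 : ℝ)) ^ finrank ℝ E * μ.real (closedBall 0 1)) :=
        setIntegral_indicator_const_closedBall_le μ (by positivity) (by positivity) S
    _ = M ^ p * R ^ finrank ℝ E * μ.real (closedBall 0 1) *
          s ^ ((finrank ℝ E : ℝ) / 2 - p) := by
        rw [mul_pow, ← Real.rpow_natCast (s ^ _), ← Real.rpow_mul hs.le, sub_eq_neg_add,
          Real.rpow_add hs]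
        ring_nf

end Rescaling

theorem integrableOn_sub_rpow_Ioc {T T' α : ℝ} (hTT' : T < T') :
    IntegrableOn (fun t => (T' - t) ^ α) (Ioc 0 T) := by
  refine (ContinuousOn.integrableOn_Icc ?_).mono_set Ioc_subset_Icc_self
  exact (continuousOn_const.sub continuousOn_id).rpow_const
    fun t ht => Or.inl (by linarith [ht.2] : T' - t ≠ 0)

theorem integral_Ioc_sub_rpow_le {T T' α : ℝ} (hT : 0 ≤ T) (hTT' : T ≤ T') (hα : -1 < α) :
    ∫ t in Ioc 0 T, (T' - t) ^ α ≤ T' ^ (α + 1) / (α + 1) := by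
  rw [← intervalIntegral.integral_of_le hT,
    intervalIntegral.integral_comp_sub_left (fun u => u ^ α) T', sub_zero,
    integral_rpow (Or.inl hα)]
  have : 0 ≤ (T' - T) ^ (α + 1) := Real.rpow_nonneg (by linarith) _
  exact div_le_div_of_nonneg_right (by linarith) (by linarith)

theorem setIntegral_Ioc_le_of_le_mul_sub_rpow {f : ℝ → ℝ} {C T T' α : ℝ} (hC : 0 ≤ C)
    (hT : 0 ≤ T) (hTT' : T < T') (hα : -1 < α) (hf₀ : ∀ t, 0 ≤ f t)
    (hf : ∀ t ∈ Ioc 0 T, f t ≤ C * (T' - t) ^ α) :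
    ∫ t in Ioc 0 T, f t ≤ C * (T' ^ (α + 1) / (α + 1)) :=
  calc ∫ t in Ioc 0 T, f t ≤ ∫ t in Ioc 0 T, C * (T' - t) ^ α :=
        integral_mono_of_nonneg (.of_forall hf₀) ((integrableOn_sub_rpow_Ioc hTT').const_mul _)
          ((ae_restrict_iff' measurableSet_Ioc).2 (.of_forall hf))
    _ ≤ C * (T' ^ (α + 1) / (α + 1)) := by
        rw [integral_const_mul]
        exact mul_le_mul_of_nonneg_left (integral_Ioc_sub_rpow_le hT hTT'.le hα) hC

theorem stmt8_general (n : ℕ) (p q : ℝ) (hp : 1 ≤ p) (hq : 1 ≤ q)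
    (hpq : 1 < 1/q + n/(2*p))
    (g : ℝ → ℝ) (hg : Continuous g) (hgsupp : HasCompactSupport g)
    (R₀ T : ℝ) (hT : 0 < T) :
    ∃ c > (0:ℝ), ∀ T' ∈ Ioo T (T+1),
      ∫ t in Ioc (0:ℝ) T,
        (∫ x in Metric.ball (0 : EuclideanSpace ℝ (Fin n)) R₀,
            |(T'-t)⁻¹ * g ((T'-t) ^ (-(1/2:ℝ)) * ‖x‖)| ^ p) ^ (q/p) ≤ c := by
  have hp₀ : 0 < p := by linarith
  obtain ⟨M, hM⟩ := hgsupp.exists_bound_of_continuous hg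
  have hM₀ : 0 ≤ M := le_trans (norm_nonneg _) (hM 0)
  obtain ⟨R, hR₀, hR⟩ := hgsupp.exists_pos_le_norm
  set C := M ^ p * R ^ n * volume.real (closedBall (0 : EuclideanSpace ℝ (Fin n)) 1)
  set α := ((n : ℝ) / 2 - p) * (q / p)
  have hα : -1 < α := neg_one_lt_mul_div_of_one_lt_inv_add_div hp₀ (by linarith) hpq
  have hα₁ : 0 < α + 1 := by linarith
  refine ⟨C ^ (q / p) * ((T + 1) ^ (α + 1) / (α + 1)) + 1, by positivity, ?_⟩
  rintro T' ⟨hTT', hT'⟩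
  have hslice : ∀ t ∈ Ioc 0 T,
      (∫ x in ball (0 : EuclideanSpace ℝ (Fin n)) R₀,
        |(T' - t)⁻¹ * g ((T' - t) ^ (-(1 / 2 : ℝ)) * ‖x‖)| ^ p) ^ (q / p) ≤
        C ^ (q / p) * (T' - t) ^ α := fun t ht => by
    have hs : 0 < T' - t := by linarith [ht.2]
    have h := setIntegral_abs_rescaled_rpow_le (volume : Measure (EuclideanSpace ℝ (Fin n)))
      hM hR₀.le hR hs hp₀ (ball 0 R₀)
    rw [finrank_euclideanSpace_fin] at h
    calc _ ≤ (C * (T' - t) ^ ((n : ℝ) / 2 - p)) ^ (q / p) :=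
          Real.rpow_le_rpow (integral_nonneg fun x => by positivity) h (by positivity)
      _ = C ^ (q / p) * (T' - t) ^ α := by
          rw [Real.mul_rpow (by positivity) (by positivity), ← Real.rpow_mul hs.le]
  calc _ ≤ C ^ (q / p) * (T' ^ (α + 1) / (α + 1)) :=
        setIntegral_Ioc_le_of_le_mul_sub_rpow (by positivity) hT.le hTT' hα
          (fun t => by positivity) hslice
    _ ≤ C ^ (q / p) * ((T + 1) ^ (α + 1) / (α + 1)) := by
        gcongr
        linarith
    _ ≤ _ := by linarith

theorem stmt8 (n : ℕ) (hn : 1 ≤ n) (p q : ℝ) (hp : 1 ≤ p) (hq : 1 ≤ q)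
    (hpq : 1 < 1/q + n/(2*p))
    (g : ℝ → ℝ) (hg : Continuous g) (hgsupp : HasCompactSupport g)
    (hgnn : ∀ ξ, 0 ≤ g ξ)
    (R₀ T : ℝ) (hR₀ : 0 < R₀) (hT : 0 < T) :
    ∃ c > (0:ℝ), ∀ T' ∈ Ioo T (T+1),
      ∫ t in Ioc (0:ℝ) T,
        (∫ x in Metric.ball (0 : EuclideanSpace ℝ (Fin n)) R₀,
            |(T'-t)⁻¹ * g ((T'-t) ^ (-(1/2:ℝ)) * ‖x‖)| ^ p) ^ (q/p) ≤ c :=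
  stmt8_general n p q hp hq hpq g hg hgsupp R₀ T hT
end
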